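/- Consider the Bayesian game setup and fix a player i. Suppose Assumptions 3.1 and 3.2 hold. Then for every 1 ≤ p ≤ ∞ and all measurable rivals' strategy profiles f_{-i} and g_{-i}, the optimal response 𝒜*_i(f_{-i}, θ_i) := argmax_{a_i∈𝒜_i} ϑ_i(a_i, f_{-i}, θ_i) satisfies the blockwise Lipschitz estimate ‖𝒜*_i(f_{-i}, ·) − 𝒜*_i(g_{-i}, ·)‖_{L^p(η_i)} ≤ Σ_{j≠i} (τ_{ij}/σ_i) ‖f_j − g_j‖_{L^p(η_j)}. -/

import Mathlib

/-!
At a type `θᵢ`, the best responses `a` to `f` and `b` to `g` satisfy the variational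
inequalities of `ϑᵢ(·, f, θᵢ)` and `ϑᵢ(·, g, θᵢ)` on `𝒜ᵢ`. Adding them and using the
`σ`-strong monotonicity of `-∇ϑᵢ(·, f, θᵢ)` gives `σ ‖a - b‖ ≤ ‖∇ϑᵢ(b, f, θᵢ) - ∇ϑᵢ(b, g, θᵢ)‖`,
and Assumption 3.2(b) under the integral bounds the right side by
`σ ∫ ∑ⱼ (τᵢⱼ / σ) ‖fⱼ(θⱼ) - gⱼ(θⱼ)‖ dηᵢ(θ₋ᵢ | θᵢ)`. Jensen's inequality in the conditional
measure and the disintegration of `η` turn this pointwise bound into an `L^p(ηᵢ)` bound by an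
`L^p(η)` norm, which Minkowski's inequality splits over the rivals.
-/

open MeasureTheory
open scoped InnerProductSpace ENNReal NNReal

noncomputable section

/-- The type space of player `i` : a subset of `ℝ^{d_i}` with the Euclidean norm. -/
abbrev Ty (n : ℕ) (d : Fin n → ℕ) (i : Fin n) : Type := EuclideanSpace ℝ (Fin (d i))

/-- The action space of player `i` : a subset of `ℝ^{z_i}` with the Euclidean norm. -/
abbrev Ac (n : ℕ) (z : Fin n → ℕ) (i : Fin n) : Type := EuclideanSpace ℝ (Fin (z i))

/-- The space `Θ_{-i}` of type profiles of the rivals of player `i`,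
equipped with the Euclidean (`ℓ²`) norm. -/
abbrev Rv (n : ℕ) (d : Fin n → ℕ) (i : Fin n) : Type :=
  PiLp 2 (fun j : {j : Fin n // j ≠ i} => EuclideanSpace ℝ (Fin (d j.val)))

/-- The space `𝒜_{-i}` of action profiles of the rivals of player `i`. -/
abbrev RvA (n : ℕ) (z : Fin n → ℕ) (i : Fin n) : Type :=
  ∀ j : {j : Fin n // j ≠ i}, EuclideanSpace ℝ (Fin (z j.val))

instance (n : ℕ) (d : Fin n → ℕ) (i : Fin n) : MeasureSpace (Rv n d i) :=
  { toMeasurableSpace := inferInstance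
    volume := Measure.map (WithLp.toLp 2)
      (volume : Measure (∀ j : {j : Fin n // j ≠ i}, EuclideanSpace ℝ (Fin (d j.val)))) }

/-- The rivals' actions `f_{-i}(θ_{-i})` induced by a strategy profile `f`. -/
def rivalsAct (n : ℕ) (d z : Fin n → ℕ) (i : Fin n)
    (f : ∀ j, Ty n d j → Ac n z j) (t : Rv n d i) : RvA n z i :=
  fun j => f j.val (t j)

/-- `f` is a strategy profile: each `f_j : Θ_j → 𝒜_j` is measurable. -/
def IsStrat (n : ℕ) (d z : Fin n → ℕ) (Θ : ∀ j, Set (Ty n d j))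
    (𝒜 : ∀ j, Set (Ac n z j)) (f : ∀ j, Ty n d j → Ac n z j) : Prop :=
  ∀ j, Measurable (f j) ∧ Set.MapsTo (f j) (Θ j) (𝒜 j)

/-- The expected utility `ϑ_i(a_i, f_{-i}, θ_i)` of player `i`, the expectation
being taken with respect to the conditional distribution `η_i(·|θ_i)` of `θ_{-i}`. -/
def vth (n : ℕ) (d z : Fin n → ℕ) (i : Fin n)
    (u : Ac n z i → RvA n z i → Ty n d i → Rv n d i → ℝ)
    (cond : Ty n d i → Measure (Rv n d i))
    (a : Ac n z i) (f : ∀ j, Ty n d j → Ac n z j) (θi : Ty n d i) : ℝ :=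
  ∫ t, u a (rivalsAct n d z i f t) θi t ∂(cond θi)

/-- Recombine an own type `θ_i` and a rival type profile `θ_{-i}` into a full
type profile `θ = (θ_i, θ_{-i})`. -/
def recomb (n : ℕ) (d : Fin n → ℕ) (i : Fin n) (θi : Ty n d i) (t : Rv n d i)
    (j : Fin n) : Ty n d j :=
  if h : j = i then (by subst h; exact θi) else t ⟨j, h⟩

section StronglyConcave

variable {E : Type*} [NormedAddCommGroup E] [InnerProductSpace ℝ E] [CompleteSpace E]

theorem IsMaxOn.inner_sub_nonpos_of_hasGradientAt {s : Set E} (hs : Convex ℝ s) {φ : E → ℝ}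
    {g a x : E} (hmax : IsMaxOn φ s a) (hφ : HasGradientAt φ g a) (ha : a ∈ s) (hx : x ∈ s) :
    ⟪g, x - a⟫_ℝ ≤ 0 := by
  simpa [InnerProductSpace.toDual_apply_apply] using
    hmax.localize.hasFDerivWithinAt_nonpos hφ.hasFDerivAt.hasFDerivWithinAt
      (sub_mem_posTangentConeAt_of_segment_subset (hs.segment_subset ha hx))

/-- Here `gφb` stands for `∇φ b`, so that `hmono` is the `σ`-strong concavity of `φ` tested at
`a` and `b`. -/
theorem mul_norm_sub_le_of_isMaxOn {s : Set E} (hs : Convex ℝ s) {φ ψ : E → ℝ}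
    {a b gφa gφb gψb : E} {σ : ℝ} (ha : a ∈ s) (hb : b ∈ s) (hφ : IsMaxOn φ s a)
    (hψ : IsMaxOn ψ s b) (hφa : HasGradientAt φ gφa a) (hψb : HasGradientAt ψ gψb b)
    (hmono : ⟪gφa - gφb, a - b⟫_ℝ ≤ -σ * ‖a - b‖ ^ 2) :
    σ * ‖a - b‖ ≤ ‖gφb - gψb‖ := by
  have hφ' : 0 ≤ ⟪gφa, a - b⟫_ℝ := by
    have := hφ.inner_sub_nonpos_of_hasGradientAt hs hφa ha hb
    rw [← neg_sub, inner_neg_right] at this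
    linarith
  have hψ' := hψ.inner_sub_nonpos_of_hasGradientAt hs hψb hb ha
  have hcs := real_inner_le_norm (gφb - gψb) (a - b)
  rw [inner_sub_left] at hmono hcs
  rcases (norm_nonneg (a - b)).eq_or_lt with hab | hab
  · rw [← hab, mul_zero]
    exact norm_nonneg _
  · exact le_of_mul_le_mul_right (by nlinarith) hab

theorem inner_integral_sub_le {α : Type*} [MeasurableSpace α] {μ : Measure α}
    [IsProbabilityMeasure μ] {F G : α → E} (hF : Integrable F μ) (hG : Integrable G μ)
    {v : E} {c : ℝ} (h : ∀ t, ⟪F t - G t, v⟫_ℝ ≤ c) :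
    ⟪∫ t, F t ∂μ - ∫ t, G t ∂μ, v⟫_ℝ ≤ c := by
  have hFG : Integrable (fun t => F t - G t) μ := hF.sub hG
  rw [← integral_sub hF hG, real_inner_comm, ← integral_inner hFG]
  calc ∫ t, ⟪v, F t - G t⟫_ℝ ∂μ ≤ ∫ _, c ∂μ :=
        integral_mono (hFG.const_inner v) (integrable_const c)
          fun t => (real_inner_comm _ _).trans_le (h t)
    _ = c := by simp

/-- Stability of the maximizer of an average of `σ`-strongly concave functions (with gradients
`F t`) when these are replaced by functions with gradients `G t`. -/
theorem enorm_sub_le_lintegral_of_isMaxOn {α : Type*} [MeasurableSpace α] {μ : Measure α}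
    [IsProbabilityMeasure μ] {s : Set E} (hs : Convex ℝ s) {φ ψ : E → ℝ} {F G : α → E → E}
    {L : α → ℝ≥0∞} {a b : E} {σ : ℝ} (hσ : 0 < σ) (ha : a ∈ s) (hb : b ∈ s)
    (hφ : IsMaxOn φ s a) (hψ : IsMaxOn ψ s b)
    (hF : ∀ x, Integrable (F · x) μ) (hG : Integrable (G · b) μ)
    (hφ' : ∀ x, HasGradientAt φ (∫ t, F t x ∂μ) x) (hψ' : HasGradientAt ψ (∫ t, G t b ∂μ) b)
    (hmono : ∀ t, ⟪F t a - F t b, a - b⟫_ℝ ≤ -σ * ‖a - b‖ ^ 2)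
    (hL : ∀ᵐ t ∂μ, ‖F t b - G t b‖ₑ ≤ ENNReal.ofReal σ * L t) :
    ‖a - b‖ₑ ≤ ∫⁻ t, L t ∂μ := by
  have hstab := mul_norm_sub_le_of_isMaxOn hs ha hb hφ hψ (hφ' a) hψ'
    (inner_integral_sub_le (hF a) (hF b) hmono)
  rw [← integral_sub (hF b) hG] at hstab
  have hσ0 : ENNReal.ofReal σ ≠ 0 := (ENNReal.ofReal_pos.2 hσ).ne'
  refine (ENNReal.mul_le_mul_iff_right hσ0 ENNReal.ofReal_ne_top).1 ?_
  calc ENNReal.ofReal σ * ‖a - b‖ₑ = ENNReal.ofReal (σ * ‖a - b‖) := by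
        rw [ENNReal.ofReal_mul hσ.le, ofReal_norm]
    _ ≤ ‖∫ t, F t b - G t b ∂μ‖ₑ := by
        rw [← ofReal_norm]
        exact ENNReal.ofReal_le_ofReal hstab
    _ ≤ ∫⁻ t, ‖F t b - G t b‖ₑ ∂μ := enorm_integral_le_lintegral_enorm _
    _ ≤ ∫⁻ t, ENNReal.ofReal σ * L t ∂μ := lintegral_mono_ae hL
    _ = ENNReal.ofReal σ * ∫⁻ t, L t ∂μ := lintegral_const_mul' _ _ ENNReal.ofReal_ne_top

end StronglyConcave

theorem rpow_lintegral_le_lintegral_rpow {α : Type*} [MeasurableSpace α] (μ : Measure α)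
    [IsProbabilityMeasure μ] {f : α → ℝ≥0∞} (hf : AEMeasurable f μ) {r : ℝ} (hr : 1 ≤ r) :
    (∫⁻ x, f x ∂μ) ^ r ≤ ∫⁻ x, f x ^ r ∂μ := by
  rcases hr.eq_or_lt with rfl | hr1
  · simp
  have hle : ∫⁻ x, f x ∂μ ≤ (∫⁻ x, f x ^ r ∂μ) ^ (1 / r) := by
    simpa using ENNReal.lintegral_mul_le_Lp_mul_Lq μ (Real.HolderConjugate.conjExponent hr1) hf
      (aemeasurable_const (b := (1 : ℝ≥0∞)))
  calc (∫⁻ x, f x ∂μ) ^ r ≤ ((∫⁻ x, f x ^ r ∂μ) ^ (1 / r)) ^ r := by gcongr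
    _ = ∫⁻ x, f x ^ r ∂μ := by
      rw [← ENNReal.rpow_mul, one_div_mul_cancel (by positivity), ENNReal.rpow_one]

section Disintegration

variable {Ω A T : Type*} [MeasurableSpace Ω] [MeasurableSpace A] [MeasurableSpace T]

/-- `η` disintegrates as `dη = dκ_a dν(a)`, the point of `Ω` being recovered as `r a t`. -/
def IsDisintegration (η : Measure Ω) (ν : Measure A) (κ : A → Measure T) (r : A → T → Ω) :
    Prop :=
  ∀ g : Ω → ℝ≥0∞, Measurable g → ∫⁻ ω, g ω ∂η = ∫⁻ a, ∫⁻ t, g (r a t) ∂κ a ∂ν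

variable {η : Measure Ω} {ν : Measure A} {κ : A → Measure T} {r : A → T → Ω}

/-- Since `a ↦ κ a {t | P (r a t)}` need not be measurable, its `ν`-integral is a lower integral:
the argument goes through the fact that it is `≤ 1` with integral `1`. -/
theorem IsDisintegration.ae_ae_of_ae (hd : IsDisintegration η ν κ r) [IsFiniteMeasure η]
    [∀ a, IsProbabilityMeasure (κ a)] (hr : ∀ a, Measurable (r a)) {P : Ω → Prop}
    (hP : MeasurableSet {ω | P ω}) (h : ∀ᵐ ω ∂η, P ω) :
    ∀ᵐ a ∂ν, ∀ᵐ t ∂κ a, P (r a t) := by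
  have hslice : ∀ a, MeasurableSet {t | P (r a t)} := fun a => hr a hP
  have hone : ∫⁻ _, 1 ∂ν = η Set.univ := by simpa using (hd 1 measurable_one).symm
  have hint : ∫⁻ a, κ a {t | P (r a t)} ∂ν = η Set.univ := by
    calc ∫⁻ a, κ a {t | P (r a t)} ∂ν
        = ∫⁻ a, ∫⁻ t, {ω | P ω}.indicator 1 (r a t) ∂κ a ∂ν := lintegral_congr fun a => by
          rw [← lintegral_indicator_one (hslice a)]
          rfl
      _ = η {ω | P ω} := by rw [← hd _ (measurable_one.indicator hP), lintegral_indicator_one hP]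
      _ = η Set.univ := (ae_iff_measure_eq hP.nullMeasurableSet).1 h
  have hfull : (fun a => κ a {t | P (r a t)}) =ᵐ[ν] 1 :=
    ae_eq_of_ae_le_of_lintegral_le (.of_forall fun a => prob_le_one)
      (by rw [hint]; exact measure_ne_top η _) aemeasurable_const (by rw [hint, ← hone]; rfl)
  filter_upwards [hfull] with a ha
  rw [ae_iff_measure_eq (hslice a).nullMeasurableSet, measure_univ]
  exact ha

theorem IsDisintegration.eLpNorm_le {F : Type*} [NormedAddCommGroup F]
    (hd : IsDisintegration η ν κ r) [IsFiniteMeasure η] [∀ a, IsProbabilityMeasure (κ a)]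
    (hr : ∀ a, Measurable (r a)) {S : Ω → ℝ≥0∞} (hS : Measurable S) {X : A → F}
    (hX : ∀ᵐ a ∂ν, ‖X a‖ₑ ≤ ∫⁻ t, S (r a t) ∂κ a) {p : ℝ≥0∞} (hp : 1 ≤ p) :
    eLpNorm X p ν ≤ eLpNorm S p η := by
  rcases eq_or_ne p ∞ with rfl | hp_top
  · rw [eLpNorm_exponent_top, eLpNorm_exponent_top]
    have hbound := hd.ae_ae_of_ae hr (measurableSet_le hS measurable_const)
      (ae_le_eLpNormEssSup (f := S))
    refine eLpNormEssSup_le_of_ae_enorm_bound ?_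
    filter_upwards [hX, hbound] with a hXa ha
    calc ‖X a‖ₑ ≤ ∫⁻ t, S (r a t) ∂κ a := hXa
      _ ≤ ∫⁻ _, eLpNormEssSup S η ∂κ a := lintegral_mono_ae ha
      _ = eLpNormEssSup S η := by simp
  have hp0 : p ≠ 0 := (zero_lt_one.trans_le hp).ne'
  have hq : 1 ≤ p.toReal := by simpa using ENNReal.toReal_mono hp_top hp
  rw [eLpNorm_eq_lintegral_rpow_enorm_toReal hp0 hp_top,
    eLpNorm_eq_lintegral_rpow_enorm_toReal hp0 hp_top]
  gcongr ?_ ^ _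
  calc ∫⁻ a, ‖X a‖ₑ ^ p.toReal ∂ν
      ≤ ∫⁻ a, (∫⁻ t, S (r a t) ∂κ a) ^ p.toReal ∂ν := by
        refine lintegral_mono_ae ?_
        filter_upwards [hX] with a ha
        gcongr
    _ ≤ ∫⁻ a, ∫⁻ t, S (r a t) ^ p.toReal ∂κ a ∂ν := lintegral_mono fun a =>
        rpow_lintegral_le_lintegral_rpow _ (hS.comp (hr a)).aemeasurable hq
    _ = ∫⁻ ω, ‖S ω‖ₑ ^ p.toReal ∂η := (hd _ (hS.pow_const _)).symm

end Disintegration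

theorem eLpNorm_sum_mul_enorm_comp_le {Ω ι : Type*} [MeasurableSpace Ω] [Fintype ι]
    {X E : ι → Type*} [∀ j, MeasurableSpace (X j)] [∀ j, NormedAddCommGroup (E j)]
    {η : Measure Ω} {π : ∀ j, Ω → X j} (hπ : ∀ j, Measurable (π j)) {F : ∀ j, X j → E j}
    (hF : ∀ j, AEStronglyMeasurable (F j) (η.map (π j))) (c : ι → ℝ) {p : ℝ≥0∞}
    (hp : 1 ≤ p) :
    eLpNorm (fun ω => ∑ j, ENNReal.ofReal (c j) * ‖F j (π j ω)‖ₑ) p η ≤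
      ∑ j, ENNReal.ofReal (c j) * eLpNorm (F j) p (η.map (π j)) := by
  have hsum : (fun ω => ∑ j, ENNReal.ofReal (c j) * ‖F j (π j ω)‖ₑ) =
      ∑ j, fun ω => ENNReal.ofReal (c j) * ‖F j (π j ω)‖ₑ := by
    ext ω
    simp
  rw [hsum]
  refine (eLpNorm_sum_le (fun j _ => ?_) hp).trans (Finset.sum_le_sum fun j _ => ?_)
  · exact ((hF j).comp_aemeasurable (hπ j).aemeasurable).enorm.const_mul _ |>.aestronglyMeasurable
  · rw [eLpNorm_map_measure (hF j) (hπ j).aemeasurable]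
    exact eLpNorm_le_nnreal_smul_eLpNorm_of_ae_le_mul' (.of_forall fun ω => le_rfl) p

theorem ENNReal.ofReal_sum_mul_le {ι : Type*} (s : Finset ι) {σ : ℝ} (hσ : 0 < σ)
    (τ y : ι → ℝ) (hy : ∀ j, 0 ≤ y j) :
    ENNReal.ofReal (∑ j ∈ s, τ j * y j) ≤
      ENNReal.ofReal σ * ∑ j ∈ s, ENNReal.ofReal (τ j / σ) * ENNReal.ofReal (y j) := by
  have hτ : ∀ j, τ j * y j ≤ σ * ((τ j / σ).toNNReal * y j) := fun j => by
    rw [← mul_assoc]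
    refine mul_le_mul_of_nonneg_right ?_ (hy j)
    calc τ j = σ * (τ j / σ) := by field_simp
      _ ≤ σ * (τ j / σ).toNNReal := by gcongr; exact Real.le_coe_toNNReal _
  calc ENNReal.ofReal (∑ j ∈ s, τ j * y j)
      ≤ ENNReal.ofReal (σ * ∑ j ∈ s, (τ j / σ).toNNReal * y j) := by
        rw [Finset.mul_sum]
        exact ENNReal.ofReal_le_ofReal (Finset.sum_le_sum fun j _ => hτ j)
    _ = ENNReal.ofReal σ * ∑ j ∈ s, ENNReal.ofReal (τ j / σ) * ENNReal.ofReal (y j) := by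
        rw [ENNReal.ofReal_mul hσ.le,
          ENNReal.ofReal_sum_of_nonneg fun j _ => mul_nonneg (NNReal.coe_nonneg _) (hy j)]
        congr 1
        refine Finset.sum_congr rfl fun j _ => ?_
        rw [ENNReal.ofReal_mul (NNReal.coe_nonneg _), ENNReal.ofReal_coe_nnreal]
        rfl

theorem recomb_self (n : ℕ) (d : Fin n → ℕ) (i : Fin n) (θi : Ty n d i) (t : Rv n d i) :
    recomb n d i θi t i = θi := by
  simp [recomb]

theorem recomb_val (n : ℕ) (d : Fin n → ℕ) (i : Fin n) (θi : Ty n d i) (t : Rv n d i)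
    (j : {j : Fin n // j ≠ i}) : recomb n d i θi t j = t j := by
  simp [recomb, j.prop]

theorem measurable_recomb (n : ℕ) (d : Fin n → ℕ) (i : Fin n) (θi : Ty n d i) :
    Measurable (recomb n d i θi) := by
  refine measurable_pi_lambda _ fun k => ?_
  by_cases hk : k = i
  · subst hk
    simp only [recomb_self]
    exact measurable_const
  · simp only [recomb, hk, dite_false]
    exact (measurable_pi_apply _).comp (WithLp.measurable_ofLp _ _)

section BestResponse

variable {n : ℕ} {d z : Fin n → ℕ} {i : Fin n} {Θ : ∀ j, Set (Ty n d j)}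
  {𝒜 : ∀ j, Set (Ac n z j)} {cond : Ty n d i → Measure (Rv n d i)}
  {u : Ac n z i → RvA n z i → Ty n d i → Rv n d i → ℝ}

theorem enorm_sub_le_lintegral_of_isMaxOn_vth (h𝒜 : Convex ℝ (𝒜 i)) {θi : Ty n d i}
    [IsProbabilityMeasure (cond θi)] {f g : ∀ j, Ty n d j → Ac n z j}
    (hf : IsStrat n d z Θ 𝒜 f) (hg : IsStrat n d z Θ 𝒜 g)
    (hexch : ∀ h : ∀ j, Ty n d j → Ac n z j, IsStrat n d z Θ 𝒜 h → ∀ a : Ac n z i,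
      Integrable (fun t => gradient (fun b => u b (rivalsAct n d z i h t) θi t) a) (cond θi) ∧
      HasGradientAt (fun b => vth n d z i u cond b h θi)
        (∫ t, gradient (fun b => u b (rivalsAct n d z i h t) θi t) a ∂(cond θi)) a)
    {σ : ℝ} (hσ : 0 < σ)
    (hconc : ∀ (ar : RvA n z i) (t : Rv n d i), ∀ a' ∈ 𝒜 i, ∀ a'' ∈ 𝒜 i,
      ⟪gradient (fun b => u b ar θi t) a' - gradient (fun b => u b ar θi t) a'',
        a' - a''⟫_ℝ ≤ -σ * ‖a' - a''‖ ^ 2)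
    {τ : Fin n → ℝ}
    (hτ : ∀ (ai : Ac n z i) (t : Rv n d i),
      ∀ ar' ar'' : RvA n z i, (∀ j, ar' j ∈ 𝒜 j.val) → (∀ j, ar'' j ∈ 𝒜 j.val) →
      ‖gradient (fun b => u b ar' θi t) ai - gradient (fun b => u b ar'' θi t) ai‖ ≤
        ∑ j : {j : Fin n // j ≠ i}, τ j.val * ‖ar' j - ar'' j‖)
    {a b : Ac n z i} (ha : a ∈ 𝒜 i) (hb : b ∈ 𝒜 i)
    (hamax : IsMaxOn (vth n d z i u cond · f θi) (𝒜 i) a)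
    (hbmax : IsMaxOn (vth n d z i u cond · g θi) (𝒜 i) b)
    (hrivals : ∀ᵐ t ∂cond θi, ∀ j : {j : Fin n // j ≠ i}, t j ∈ Θ j) :
    ‖a - b‖ₑ ≤ ∫⁻ t, ∑ j : {j : Fin n // j ≠ i},
      ENNReal.ofReal (τ j / σ) * ‖f j (t j) - g j (t j)‖ₑ ∂cond θi := by
  refine enorm_sub_le_lintegral_of_isMaxOn h𝒜 hσ ha hb hamax hbmax
    (fun x => (hexch f hf x).1) (hexch g hg b).1 (fun x => (hexch f hf x).2) (hexch g hg b).2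
    (fun t => hconc _ t a ha b hb) ?_
  filter_upwards [hrivals] with t ht
  rw [← ofReal_norm]
  refine (ENNReal.ofReal_le_ofReal (hτ b t _ _ (fun j => (hf j).2 (ht j))
    (fun j => (hg j).2 (ht j)))).trans ?_
  simpa only [ofReal_norm] using
    ENNReal.ofReal_sum_mul_le Finset.univ hσ (fun j : {j : Fin n // j ≠ i} => τ j)
      (fun j => ‖f j (t j) - g j (t j)‖) fun j => norm_nonneg _

end BestResponse

theorem stmt_2_general
    (n : ℕ) (d z : Fin n → ℕ) (i : Fin n)
    (Θ : ∀ j, Set (Ty n d j)) (𝒜 : ∀ j, Set (Ac n z j))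
    (hΘ : ∀ j, (Θ j).Nonempty ∧ IsCompact (Θ j) ∧ Convex ℝ (Θ j))
    (h𝒜 : ∀ j, (𝒜 j).Nonempty ∧ IsCompact (𝒜 j) ∧ Convex ℝ (𝒜 j))
    -- the joint distribution η of the types, concentrated on Θ
    (η : Measure (∀ j, Ty n d j)) (hη : IsProbabilityMeasure η)
    (hηsupp : η {θ | ¬ ∀ j, θ j ∈ Θ j} = 0)
    -- the conditional distribution `η_i(·|θ_i)` and the disintegration of η
    (cond : Ty n d i → Measure (Rv n d i))
    (hprob : ∀ θi, IsProbabilityMeasure (cond θi))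
    (hdisint : ∀ g : (∀ j, Ty n d j) → ℝ≥0∞, Measurable g →
      ∫⁻ θ, g θ ∂η =
        ∫⁻ θi, ∫⁻ t, g (recomb n d i θi t) ∂(cond θi) ∂(η.map (fun θ => θ i)))
    (u : Ac n z i → RvA n z i → Ty n d i → Rv n d i → ℝ)
    -- Assumption 3.1(b): differentiation under the integral sign
    (hexch : ∀ f : ∀ j, Ty n d j → Ac n z j, IsStrat n d z Θ 𝒜 f →
      ∀ θi ∈ Θ i, ∀ a : Ac n z i,
        Integrable (fun t => gradient (fun b => u b (rivalsAct n d z i f t) θi t) a)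
          (cond θi) ∧
        HasGradientAt (fun b => vth n d z i u cond b f θi)
          (∫ t, gradient (fun b => u b (rivalsAct n d z i f t) θi t) a ∂(cond θi)) a)
    -- Assumption 3.2(a): `σ_i`-strong concavity of `u_i` in `a_i`
    (σ : ℝ) (hσ : 0 < σ)
    (hconc : ∀ (ar : RvA n z i) (θi : Ty n d i) (t : Rv n d i),
      ∀ a' ∈ 𝒜 i, ∀ a'' ∈ 𝒜 i,
      ⟪gradient (fun b => u b ar θi t) a' - gradient (fun b => u b ar θi t) a'',
        a' - a''⟫_ℝ ≤ -σ * ‖a' - a''‖ ^ 2)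
    -- Assumption 3.2(b): blockwise Lipschitz continuity in rivals' actions
    (τ : Fin n → ℝ)
    (hτ : ∀ (ai : Ac n z i) (θi : Ty n d i) (t : Rv n d i),
      ∀ ar' ar'' : RvA n z i, (∀ j, ar' j ∈ 𝒜 j.val) → (∀ j, ar'' j ∈ 𝒜 j.val) →
      ‖gradient (fun b => u b ar' θi t) ai - gradient (fun b => u b ar'' θi t) ai‖ ≤
        ∑ j : {j : Fin n // j ≠ i}, τ j.val * ‖ar' j - ar'' j‖) :
    ∀ p : ℝ≥0∞, 1 ≤ p →
    ∀ f g : ∀ j, Ty n d j → Ac n z j, IsStrat n d z Θ 𝒜 f → IsStrat n d z Θ 𝒜 g →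
    ∀ bf bg : Ty n d i → Ac n z i,
      (∀ θi ∈ Θ i, bf θi ∈ 𝒜 i ∧
        ∀ x ∈ 𝒜 i, vth n d z i u cond x f θi ≤ vth n d z i u cond (bf θi) f θi) →
      (∀ θi ∈ Θ i, bg θi ∈ 𝒜 i ∧
        ∀ x ∈ 𝒜 i, vth n d z i u cond x g θi ≤ vth n d z i u cond (bg θi) g θi) →
      eLpNorm (fun θi => bf θi - bg θi) p (η.map (fun θ => θ i)) ≤
        ∑ j : {j : Fin n // j ≠ i}, ENNReal.ofReal (τ j.val / σ) *
          eLpNorm (fun x => f j.val x - g j.val x) p (η.map (fun θ => θ j.val)) := by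
  intro p hp f g hf hg bf bg hbf hbg
  have hdisint' : IsDisintegration η (η.map fun θ => θ i) cond (recomb n d i) := hdisint
  have hΘmeas : MeasurableSet {θ : ∀ j, Ty n d j | ∀ j, θ j ∈ Θ j} := by
    simp only [Set.ofPred_forall]
    exact .iInter fun j => measurable_pi_apply j (hΘ j).2.1.isClosed.measurableSet
  have hgood := hdisint'.ae_ae_of_ae (measurable_recomb n d i) hΘmeas (ae_iff.2 hηsupp)
  set S : (∀ j, Ty n d j) → ℝ≥0∞ := fun θ =>
    ∑ j : {j : Fin n // j ≠ i}, ENNReal.ofReal (τ j / σ) * ‖f j (θ j) - g j (θ j)‖ₑ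
  have hS : Measurable S := Finset.measurable_sum _ fun j _ =>
    (((hf j).1.sub (hg j).1).comp (measurable_pi_apply _)).enorm.const_mul _
  have hkey : ∀ᵐ θi ∂η.map (fun θ => θ i),
      ‖bf θi - bg θi‖ₑ ≤ ∫⁻ t, S (recomb n d i θi t) ∂cond θi := by
    filter_upwards [hgood] with θi hθi
    have hΘi : θi ∈ Θ i := by
      obtain ⟨t, ht⟩ := hθi.exists
      simpa only [recomb_self] using ht i
    simp only [S, recomb_val]
    exact enorm_sub_le_lintegral_of_isMaxOn_vth (h𝒜 i).2.2 hf hg (fun h hh => hexch h hh θi hΘi)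
      hσ (hconc · θi) (hτ · θi) (hbf θi hΘi).1 (hbg θi hΘi).1 (hbf θi hΘi).2 (hbg θi hΘi).2
      (hθi.mono fun t ht j => recomb_val n d i θi t j ▸ ht j)
  have hS_le := eLpNorm_sum_mul_enorm_comp_le (η := η)
    (fun j : {j : Fin n // j ≠ i} => measurable_pi_apply j.val) (F := fun j x => f j x - g j x)
    (fun j => ((hf j).1.sub (hg j).1).aestronglyMeasurable) (fun j => τ j / σ) hp
  exact (hdisint'.eLpNorm_le (measurable_recomb n d i) hS hkey hp).trans hS_le

/-- **Theorem 3.1 (rival-strategy part): blockwise Lipschitz continuity of the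
optimal response in the rivals' strategies, in `L^p(η_i)`.**  Under Assumptions
3.1 and 3.2, for every `1 ≤ p ≤ ∞` and all strategy profiles `f_{-i}, g_{-i}`,
`‖𝒜*_i(f_{-i},·) − 𝒜*_i(g_{-i},·)‖_{L^p(η_i)} ≤ Σ_{j≠i} (τ_{ij}/σ_i)‖f_j − g_j‖_{L^p(η_j)}`. -/
theorem stmt_2
    (n : ℕ) (d z : Fin n → ℕ) (i : Fin n)
    (Θ : ∀ j, Set (Ty n d j)) (𝒜 : ∀ j, Set (Ac n z j))
    (hΘ : ∀ j, (Θ j).Nonempty ∧ IsCompact (Θ j) ∧ Convex ℝ (Θ j))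
    (h𝒜 : ∀ j, (𝒜 j).Nonempty ∧ IsCompact (𝒜 j) ∧ Convex ℝ (𝒜 j))
    -- the joint distribution η of the types, concentrated on Θ
    (η : Measure (∀ j, Ty n d j)) (hη : IsProbabilityMeasure η)
    (hηsupp : η {θ | ¬ ∀ j, θ j ∈ Θ j} = 0)
    -- the conditional distribution `η_i(·|θ_i)` and the disintegration of η
    (cond : Ty n d i → Measure (Rv n d i))
    (hprob : ∀ θi, IsProbabilityMeasure (cond θi))
    (hdisint : ∀ g : (∀ j, Ty n d j) → ℝ≥0∞, Measurable g →
      ∫⁻ θ, g θ ∂η =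
        ∫⁻ θi, ∫⁻ t, g (recomb n d i θi t) ∂(cond θi) ∂(η.map (fun θ => θ i)))
    (u : Ac n z i → RvA n z i → Ty n d i → Rv n d i → ℝ)
    -- Assumption 3.1(a)
    (hC1 : ContDiff ℝ 1 (fun p : Ac n z i × RvA n z i × Ty n d i × Rv n d i =>
      u p.1 p.2.1 p.2.2.1 p.2.2.2))
    -- Assumption 3.1(b): local integrable domination of `∇_{a_i}u_i`
    (hdom : ∀ f : ∀ j, Ty n d j → Ac n z j, IsStrat n d z Θ 𝒜 f →
      ∀ θi ∈ Θ i, ∀ ahat ∈ 𝒜 i, ∃ U : Set (Ac n z i), U ⊆ 𝒜 i ∧ IsClosed U ∧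
        U ∈ nhdsWithin ahat (𝒜 i) ∧ ∃ h : Rv n d i → ℝ, (∀ t, 0 ≤ h t) ∧
          Integrable h (cond θi) ∧ ∀ a ∈ U, ∀ t : Rv n d i,
            ‖gradient (fun b => u b (rivalsAct n d z i f t) θi t) a‖ ≤ h t)
    -- Assumption 3.1(b): differentiation under the integral sign
    (hexch : ∀ f : ∀ j, Ty n d j → Ac n z j, IsStrat n d z Θ 𝒜 f →
      ∀ θi ∈ Θ i, ∀ a : Ac n z i,
        Integrable (fun t => gradient (fun b => u b (rivalsAct n d z i f t) θi t) a)
          (cond θi) ∧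
        HasGradientAt (fun b => vth n d z i u cond b f θi)
          (∫ t, gradient (fun b => u b (rivalsAct n d z i f t) θi t) a ∂(cond θi)) a)
    -- Assumption 3.2(a): `σ_i`-strong concavity of `u_i` in `a_i`
    (σ : ℝ) (hσ : 0 < σ)
    (hconc : ∀ (ar : RvA n z i) (θi : Ty n d i) (t : Rv n d i),
      ∀ a' ∈ 𝒜 i, ∀ a'' ∈ 𝒜 i,
      ⟪gradient (fun b => u b ar θi t) a' - gradient (fun b => u b ar θi t) a'',
        a' - a''⟫_ℝ ≤ -σ * ‖a' - a''‖ ^ 2)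
    -- Assumption 3.2(b): blockwise Lipschitz continuity in rivals' actions
    (τ : Fin n → ℝ)
    (hτ : ∀ (ai : Ac n z i) (θi : Ty n d i) (t : Rv n d i),
      ∀ ar' ar'' : RvA n z i, (∀ j, ar' j ∈ 𝒜 j.val) → (∀ j, ar'' j ∈ 𝒜 j.val) →
      ‖gradient (fun b => u b ar' θi t) ai - gradient (fun b => u b ar'' θi t) ai‖ ≤
        ∑ j : {j : Fin n // j ≠ i}, τ j.val * ‖ar' j - ar'' j‖) :
    ∀ p : ℝ≥0∞, 1 ≤ p →
    ∀ f g : ∀ j, Ty n d j → Ac n z j, IsStrat n d z Θ 𝒜 f → IsStrat n d z Θ 𝒜 g →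
    ∀ bf bg : Ty n d i → Ac n z i,
      (∀ θi ∈ Θ i, bf θi ∈ 𝒜 i ∧
        ∀ x ∈ 𝒜 i, vth n d z i u cond x f θi ≤ vth n d z i u cond (bf θi) f θi) →
      (∀ θi ∈ Θ i, bg θi ∈ 𝒜 i ∧
        ∀ x ∈ 𝒜 i, vth n d z i u cond x g θi ≤ vth n d z i u cond (bg θi) g θi) →
      eLpNorm (fun θi => bf θi - bg θi) p (η.map (fun θ => θ i)) ≤
        ∑ j : {j : Fin n // j ≠ i}, ENNReal.ofReal (τ j.val / σ) *
          eLpNorm (fun x => f j.val x - g j.val x) p (η.map (fun θ => θ j.val)) :=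
  stmt_2_general n d z i Θ 𝒜 hΘ h𝒜 η hη hηsupp cond hprob hdisint u hexch σ hσ hconc τ hτ
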